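/- For positive integers n and s, the odd alternating harmonic sum H̄_n(s̄) = Σ_{k=0}^{n-1} (-1)^k/(2k+1)^s satisfies H̄_n(s̄) = Σ_{k=1}^{n} (-1)^{k-1}·C(n,k)·Σ_{l=0}^{k-1} ((1/2)_l)^s · (1-k)_l · (-1)^l / (((3/2)_l)^s · l!). -/

import Mathlib

open Finset

noncomputable def rising (a : ℝ) (l : ℕ) : ℝ := ∏ i ∈ Finset.range l, (a + (i : ℝ))

lemma rising_succ (a : ℝ) (l : ℕ) : rising a (l + 1) = rising a l * (a + l) :=
  Finset.prod_range_succ _ _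

lemma rising_half_pos (l : ℕ) : 0 < rising (1 / 2) l := by
  refine Finset.prod_pos fun i _ => by positivity

lemma rising_three_half (l : ℕ) : rising (3 / 2 : ℝ) l = (2 * l + 1) * rising (1 / 2) l := by
  induction l with
  | zero => simp [rising]
  | succ l ih => rw [rising_succ, rising_succ, ih]; push_cast; ring

lemma rising_one_sub (k l : ℕ) (hk : 1 ≤ k) :
    rising (1 - (k : ℝ)) l = (-1) ^ l * ((k - 1).descFactorial l : ℝ) := by
  induction l with
  | zero => simp [rising]
  | succ l ih =>
    rw [rising_succ, ih, Nat.descFactorial_succ]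
    rcases le_or_gt (l + 1) (k - 1) with h | h
    · have hle : l ≤ k - 1 := by omega
      push_cast [Nat.cast_sub hle, Nat.cast_sub hk]
      ring
    · rcases Nat.lt_or_ge (k - 1) l with h3 | h3
      · have h2 : (k - 1).descFactorial l = 0 := Nat.descFactorial_eq_zero_iff_lt.mpr h3
        simp [h2]
      · have hk' : k = l + 1 := by omega
        subst hk'
        have h0 : l + 1 - 1 - l = 0 := by omega
        rw [h0]
        push_cast
        ring

lemma sum_Icc_shift (a b c : ℕ) (f : ℕ → ℝ) :
    ∑ k ∈ Icc (a + c) (b + c), f k = ∑ j ∈ Icc a b, f (j + c) := by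
  rw [← Finset.map_add_right_Icc, Finset.sum_map]; rfl

lemma alt_sum_choose (m : ℕ) (hm : m ≠ 0) :
    ∑ i ∈ range (m + 1), (-1 : ℝ) ^ i * (m.choose i : ℝ) = 0 := by
  have h := add_pow (-1 : ℝ) 1 m
  simp only [neg_add_cancel, one_pow, mul_one, zero_pow hm] at h
  linarith [h]

lemma D_lemma (n l : ℕ) (h : l < n) :
    ∑ j ∈ Icc l n, (-1 : ℝ) ^ j * (n.choose j : ℝ) * (j.choose l : ℝ) = 0 := by
  have key : ∀ j ∈ Icc l n, (-1 : ℝ) ^ j * (n.choose j : ℝ) * (j.choose l : ℝ)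
      = (n.choose l : ℝ) * ((-1) ^ j * ((n - l).choose (j - l) : ℝ)) := by
    intro j hj
    obtain ⟨h1, h2⟩ := mem_Icc.mp hj
    have e := Nat.choose_mul (n := n) h1
    have e' : ((n.choose j : ℕ) : ℝ) * (j.choose l : ℝ) = (n.choose l : ℝ) * ((n - l).choose (j - l) : ℝ) := by
      exact_mod_cast congrArg (Nat.cast : ℕ → ℝ) e
    rw [mul_assoc, e']; ring
  rw [Finset.sum_congr rfl key, ← Finset.mul_sum]
  have hIcc : Icc l n = Icc (0 + l) ((n - l) + l) := by
    congr 1 <;> omega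
  rw [hIcc, sum_Icc_shift]
  have : ∑ j ∈ Icc 0 (n - l), (-1 : ℝ) ^ (j + l) * ((n - l).choose (j + l - l) : ℝ)
      = (-1) ^ l * ∑ i ∈ range (n - l + 1), (-1 : ℝ) ^ i * ((n - l).choose i : ℝ) := by
    rw [Finset.mul_sum, ← Finset.Ico_add_one_right_eq_Icc, Nat.Ico_zero_eq_range]
    refine Finset.sum_congr rfl fun i _ => ?_
    rw [Nat.add_sub_cancel, pow_add]; ring
  rw [this, alt_sum_choose (n - l) (by omega)]
  ring

lemma S_lemma : ∀ n : ℕ, ∀ l < n,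
    ∑ k ∈ Icc (l + 1) n, (-1 : ℝ) ^ (k + 1) * (n.choose k : ℝ) * ((k - 1).choose l : ℝ)
      = (-1) ^ l := by
  intro n
  induction n with
  | zero => exact fun l hl => absurd hl (Nat.not_lt_zero l)
  | succ n ih =>
    intro l hl
    rw [sum_Icc_shift l n 1]
    have step : ∀ j ∈ Icc l n, (-1 : ℝ) ^ (j + 1 + 1) * ((n + 1).choose (j + 1) : ℝ) * ((j + 1 - 1).choose l : ℝ)
        = (-1) ^ j * (n.choose j : ℝ) * (j.choose l : ℝ)
          + (-1) ^ (j + 1 + 1) * (n.choose (j + 1) : ℝ) * ((j + 1 - 1).choose l : ℝ) := by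
      intro j _
      rw [Nat.choose_succ_succ]
      push_cast
      ring
    rw [Finset.sum_congr rfl step, Finset.sum_add_distrib]
    have hB : ∑ x ∈ Icc l n, (-1 : ℝ) ^ (x + 1 + 1) * (n.choose (x + 1) : ℝ) * ((x + 1 - 1).choose l : ℝ)
        = ∑ k ∈ Icc (l + 1) n, (-1 : ℝ) ^ (k + 1) * (n.choose k : ℝ) * ((k - 1).choose l : ℝ) := by
      have h0 := sum_Icc_shift l n 1
        (fun k => (-1 : ℝ) ^ (k + 1) * (n.choose k : ℝ) * ((k - 1).choose l : ℝ))
      beta_reduce at h0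
      rw [← h0, Finset.sum_Icc_succ_top (by omega)]
      simp [Nat.choose_succ_self]
    rw [hB]
    rcases Nat.lt_or_ge l n with h | h
    · rw [D_lemma n l h, ih l h, zero_add]
    · have hln : l = n := by omega
      subst hln
      rw [Finset.Icc_self, Finset.sum_singleton]
      have : Icc (l + 1) l = ∅ := by rw [Finset.Icc_eq_empty]; omega
      rw [this, Finset.sum_empty, add_zero]
      simp

theorem odd_alt_harmonic_eval (n s : ℕ) (hn : 1 ≤ n) (hs : 1 ≤ s) :
    ∑ k ∈ Finset.range n, (-1 : ℝ) ^ k / (2 * (k : ℝ) + 1) ^ s =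
      ∑ k ∈ Finset.Icc 1 n, (-1 : ℝ) ^ (k - 1) * (n.choose k : ℝ) *
        ∑ l ∈ Finset.range k,
          (rising (1 / 2) l) ^ s * rising (1 - (k : ℝ)) l * (-1 : ℝ) ^ l /
            ((rising (3 / 2) l) ^ s * (Nat.factorial l : ℝ)) := by
  -- Step 1: simplify each summand of the RHS
  have hterm : ∀ k ∈ Icc 1 n, (-1 : ℝ) ^ (k - 1) * (n.choose k : ℝ) *
        ∑ l ∈ Finset.range k,
          (rising (1 / 2) l) ^ s * rising (1 - (k : ℝ)) l * (-1 : ℝ) ^ l /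
            ((rising (3 / 2) l) ^ s * (Nat.factorial l : ℝ))
      = ∑ l ∈ Finset.range k,
          (-1 : ℝ) ^ (k + 1) * (n.choose k : ℝ) * ((k - 1).choose l : ℝ) / (2 * l + 1) ^ s := by
    intro k hk
    obtain ⟨hk1, hk2⟩ := mem_Icc.mp hk
    have hsign : (-1 : ℝ) ^ (k - 1) = (-1) ^ (k + 1) := by
      obtain ⟨m, rfl⟩ := Nat.exists_eq_add_of_le hk1
      simp [pow_add, pow_succ, Nat.add_comm]
    rw [hsign, Finset.mul_sum]
    refine Finset.sum_congr rfl fun l _ => ?_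
    have e1 : (rising (1 / 2) l) ^ s * rising (1 - (k : ℝ)) l * (-1 : ℝ) ^ l /
            ((rising (3 / 2) l) ^ s * (Nat.factorial l : ℝ))
        = ((k - 1).choose l : ℝ) / (2 * l + 1) ^ s := by
      rw [rising_three_half, rising_one_sub k l hk1, mul_pow]
      have h1 : rising (1 / 2 : ℝ) l ≠ 0 := (rising_half_pos l).ne'
      have h2 : ((2 : ℝ) * l + 1) ≠ 0 := by positivity
      have h3 : (Nat.factorial l : ℝ) ≠ 0 := by positivity
      have h4 : ((k - 1).descFactorial l : ℝ) = (Nat.factorial l : ℝ) * ((k - 1).choose l : ℝ) := by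
        exact_mod_cast congrArg (Nat.cast : ℕ → ℝ) (Nat.descFactorial_eq_factorial_mul_choose (k - 1) l)
      have hsq : ((-1 : ℝ)) ^ l * (-1) ^ l = 1 := by
        rw [← mul_pow]; norm_num
      rw [h4]
      field_simp
      linear_combination ((k - 1).choose l : ℝ) * hsq
    rw [e1]; ring
  rw [Finset.sum_congr rfl hterm]
  -- Step 2: swap the order of summation
  have hswap : ∑ k ∈ Icc 1 n, ∑ l ∈ Finset.range k,
        (-1 : ℝ) ^ (k + 1) * (n.choose k : ℝ) * ((k - 1).choose l : ℝ) / (2 * l + 1) ^ s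
      = ∑ l ∈ Finset.range n, ∑ k ∈ Icc (l + 1) n,
        (-1 : ℝ) ^ (k + 1) * (n.choose k : ℝ) * ((k - 1).choose l : ℝ) / (2 * l + 1) ^ s := by
    refine Finset.sum_comm' fun k l => ?_
    simp only [mem_Icc, Finset.mem_range]
    omega
  rw [hswap]
  -- Step 3: evaluate the inner sums using the combinatorial identity
  refine (Finset.sum_congr rfl fun l hl => ?_).symm
  have hl' : l < n := Finset.mem_range.mp hl
  rw [← Finset.sum_div, S_lemma n l hl']
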